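/- Let p be an odd prime. Every unit of ℤ[ζ_p] can be written in the form ζ_p^j · u for some integer j with 0 ≤ j < p and some unit u of the real subring ℤ[ζ_p + ζ_p^{-1}]. -/

import Mathlib

noncomputable section

/-- The subring `ℤ[ζ]` of `ℂ` generated by `ζ`. -/
def zRing (ζ : ℂ) : Subring ℂ := Subring.closure {ζ}

/-- The subring `ℤ[ζ + ζ⁻¹]` of `ℂ`. -/
def zRealRing (ζ : ℂ) : Subring ℂ := Subring.closure {ζ + ζ⁻¹}

/-!
Let `e` be a unit of `ℤ[ζ]`. Complex conjugation commutes with every embedding of the abelian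
field `ℚ(ζ)` into `ℂ`, so all conjugates of the algebraic integer `e / ē` have absolute value `1`;
by Kronecker's theorem it is a root of unity of `ℚ(ζ)`, that is `± ζ ^ r`. The sign is `+`: modulo
`1 - ζ` we have `ζ ≡ 1` and `ē ≡ e`, so `e = - ζ ^ r ē` would give `2 e ≡ 0`, while `1 - ζ` does
not divide `2`. As `p` is odd, `ζ ^ r = η ^ 2` for a power `η` of `ζ`, and then `u = η⁻¹ e` is a
unit of `ℤ[ζ]` fixed by conjugation, hence a unit of `ℤ[ζ + ζ⁻¹]`.
-/

open Polynomial ComplexConjugate IntermediateField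

variable {n : ℕ} {ζ : ℂ}

lemma self_mem_zRing : ζ ∈ zRing ζ := Subring.subset_closure rfl

lemma zRing.inv_coe_units_mem (e : (zRing ζ)ˣ) : ((e : zRing ζ) : ℂ)⁻¹ ∈ zRing ζ :=
  map_units_inv (zRing ζ).subtype e ▸ (e⁻¹ : (zRing ζ)ˣ).1.2

section Conjugation

variable [NeZero n] (hζ : IsPrimitiveRoot ζ n)
include hζ

lemma IsPrimitiveRoot.inv_eq_pow_pred : ζ⁻¹ = ζ ^ (n - 1) := by
  rw [eq_comm, ← mul_eq_one_iff_eq_inv₀ (hζ.ne_zero (NeZero.ne n)), ← pow_succ,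
    Nat.sub_add_cancel NeZero.one_le, hζ.pow_eq_one]

lemma IsPrimitiveRoot.conj_eq_inv : conj ζ = ζ⁻¹ :=
  (Complex.inv_eq_conj (hζ.norm'_eq_one (NeZero.ne n))).symm

lemma IsPrimitiveRoot.conj_mem_zRing {x : ℂ} (hx : x ∈ zRing ζ) : conj x ∈ zRing ζ := by
  refine (Subring.closure_le (t := (zRing ζ).comap (starRingEnd ℂ))).2 ?_ hx
  simpa [hζ.conj_eq_inv, hζ.inv_eq_pow_pred] using pow_mem self_mem_zRing _

lemma IsPrimitiveRoot.conj_eq_self_of_mem_zRealRing {x : ℂ} (hx : x ∈ zRealRing ζ) :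
    conj x = x := by
  refine (Subring.closure_le (t := RingHom.eqLocus (starRingEnd ℂ) (RingHom.id ℂ))).2 ?_ hx
  simp [hζ.conj_eq_inv, add_comm]

end Conjugation

lemma exists_add_mul_zeta_of_mem_zRing (hζ0 : ζ ≠ 0) {x : ℂ} (hx : x ∈ zRing ζ) :
    ∃ a ∈ zRealRing ζ, ∃ b ∈ zRealRing ζ, x = a + b * ζ := by
  have hθ : ζ + ζ⁻¹ ∈ zRealRing ζ := Subring.subset_closure rfl
  induction hx using Subring.closure_induction with
  | mem y hy =>
    obtain rfl : y = ζ := hy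
    exact ⟨0, zero_mem _, 1, one_mem _, by ring⟩
  | zero => exact ⟨0, zero_mem _, 0, zero_mem _, by ring⟩
  | one => exact ⟨1, one_mem _, 0, zero_mem _, by ring⟩
  | add x y _ _ ihx ihy =>
    obtain ⟨a, ha, b, hb, rfl⟩ := ihx
    obtain ⟨c, hc, d, hd, rfl⟩ := ihy
    exact ⟨a + c, add_mem ha hc, b + d, add_mem hb hd, by ring⟩
  | neg x _ ihx =>
    obtain ⟨a, ha, b, hb, rfl⟩ := ihx
    exact ⟨-a, neg_mem ha, -b, neg_mem hb, by ring⟩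
  | mul x y _ _ ihx ihy =>
    obtain ⟨a, ha, b, hb, rfl⟩ := ihx
    obtain ⟨c, hc, d, hd, rfl⟩ := ihy
    -- `ζ ^ 2 = (ζ + ζ⁻¹) * ζ - 1`
    refine ⟨a * c - b * d, sub_mem (mul_mem ha hc) (mul_mem hb hd),
      a * d + b * c + b * d * (ζ + ζ⁻¹),
      add_mem (add_mem (mul_mem ha hd) (mul_mem hb hc)) (mul_mem (mul_mem hb hd) hθ), ?_⟩
    field_simp
    ring

lemma IsPrimitiveRoot.mem_zRealRing_of_conj_eq_self (hζ : IsPrimitiveRoot ζ n) (hn : 2 < n)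
    {x : ℂ} (hx : x ∈ zRing ζ) (hc : conj x = x) : x ∈ zRealRing ζ := by
  have : NeZero n := ⟨by omega⟩
  obtain ⟨a, ha, b, hb, rfl⟩ := exists_add_mul_zeta_of_mem_zRing (hζ.ne_zero (NeZero.ne n)) hx
  rw [map_add, map_mul, hζ.conj_eq_self_of_mem_zRealRing ha,
    hζ.conj_eq_self_of_mem_zRealRing hb, hζ.conj_eq_inv, add_right_inj] at hc
  have hζ' : ζ⁻¹ ≠ ζ := by
    intro h
    refine hζ.pow_ne_one_of_pos_of_lt two_ne_zero hn ?_
    rw [sq]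
    nth_rw 1 [← h]
    exact inv_mul_cancel₀ (hζ.ne_zero (NeZero.ne n))
  obtain rfl : b = 0 := by simpa [hζ'] using hc
  simpa using ha

section Kronecker

/-- Unlike `IsPrimitiveRoot.intermediateField_adjoin_isCyclotomicExtension`, this does not ask
`L` to be algebraic over `F`. -/
lemma IsPrimitiveRoot.isCyclotomicExtension_adjoin {F L : Type*} [Field F] [Field L]
    [Algebra F L] [NeZero n] {ζ : L} (hζ : IsPrimitiveRoot ζ n) :
    IsCyclotomicExtension {n} F F⟮ζ⟯ := by
  have hint : IsIntegral F ζ := (hζ.isIntegral (NeZero.pos n)).tower_top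
  refine IsCyclotomicExtension.equiv _ _ _ (h := ?_) (.refl : F⟮ζ⟯.toSubalgebra ≃ₐ[F] _)
  rw [adjoin_simple_toSubalgebra_of_isAlgebraic hint.isAlgebraic]
  exact hζ.adjoin_isCyclotomicExtension F

variable {K : IntermediateField ℚ ℂ} [Normal ℚ K] [IsMulCommutative (K ≃ₐ[ℚ] K)]

lemma IntermediateField.conj_apply_eq_apply_restrictNormal (φ : K →+* ℂ) (x : K) :
    conj (φ x) = φ ((Complex.conjAe.restrictScalars ℚ).restrictNormal K x) := by
  set σ := φ.toRatAlgHom.restrictNormal' K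
  set τ := (Complex.conjAe.restrictScalars ℚ).restrictNormal K
  have hφ (y : K) : φ y = σ y := (φ.toRatAlgHom.restrictNormal_commutes K y).symm
  have hτ (y : K) : ((τ y : K) : ℂ) = conj (y : ℂ) := AlgEquiv.restrictNormal_commutes _ K y
  rw [hφ, hφ, ← hτ]
  change ((τ * σ) x : ℂ) = ((σ * τ) x : ℂ)
  rw [mul_comm' τ σ]

lemma IntermediateField.isOfFinOrder_of_norm_eq_one [NumberField K] {x : K}
    (hx : IsIntegral ℤ x) (h : ‖(x : ℂ)‖ = 1) : IsOfFinOrder x := by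
  set τ := (Complex.conjAe.restrictScalars ℚ).restrictNormal K
  have hxτ : x * τ x = 1 := by
    apply Subtype.ext
    have : ((τ x : K) : ℂ) = conj (x : ℂ) := AlgEquiv.restrictNormal_commutes _ K x
    rw [IntermediateField.coe_mul, this, Complex.mul_conj', h]
    simp
  obtain ⟨m, hm, hxm⟩ := NumberField.Embeddings.pow_eq_one_of_norm_eq_one K ℂ hx fun φ => by
    have : (‖φ x‖ : ℂ) ^ 2 = 1 := by
      rw [← Complex.mul_conj', conj_apply_eq_apply_restrictNormal, ← map_mul, hxτ, map_one]
    exact (pow_eq_one_iff_of_nonneg (norm_nonneg _) two_ne_zero).1 (by exact_mod_cast this)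
  exact isOfFinOrder_iff_pow_eq_one.2 ⟨m, hm, hxm⟩

lemma IsPrimitiveRoot.isIntegral_of_mem_zRing [NeZero n] (hζ : IsPrimitiveRoot ζ n) {x : ℂ}
    (hx : x ∈ zRing ζ) : IsIntegral ℤ x :=
  (Subring.closure_le (t := (integralClosure ℤ ℂ).toSubring)).2
    (Set.singleton_subset_iff.2 (hζ.isIntegral (NeZero.pos n))) hx

lemma IsPrimitiveRoot.exists_pow_or_neg_pow_of_mem_zRing (hζ : IsPrimitiveRoot ζ n) (hn : Odd n)
    {x : ℂ} (hx : x ∈ zRing ζ) (h : ‖x‖ = 1) : ∃ r < n, x = ζ ^ r ∨ x = -ζ ^ r := by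
  have : NeZero n := ⟨hn.pos.ne'⟩
  have : IsCyclotomicExtension {n} ℚ ℚ⟮ζ⟯ := hζ.isCyclotomicExtension_adjoin
  have := IsCyclotomicExtension.numberField {n} ℚ ℚ⟮ζ⟯
  have := IsCyclotomicExtension.isGalois {n} ℚ ℚ⟮ζ⟯
  have := IsCyclotomicExtension.isMulCommutative {n} ℚ ℚ⟮ζ⟯
  have hζK : ζ ∈ ℚ⟮ζ⟯ := mem_adjoin_simple_self ℚ ζ
  have hxK : x ∈ ℚ⟮ζ⟯ :=
    (Subring.closure_le (t := ℚ⟮ζ⟯.toSubring)).2 (Set.singleton_subset_iff.2 hζK) hx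
  have hint : IsIntegral ℤ (⟨x, hxK⟩ : ℚ⟮ζ⟯) :=
    (isIntegral_algebraMap_iff (algebraMap ℚ⟮ζ⟯ ℂ).injective).1 (hζ.isIntegral_of_mem_zRing hx)
  obtain ⟨r, hr, hxr⟩ := (IsPrimitiveRoot.coe_submonoidClass_iff (ζ := (⟨ζ, hζK⟩ : ℚ⟮ζ⟯))).1 hζ
    |>.exists_pow_or_neg_mul_pow_of_isOfFinOrder hn (isOfFinOrder_of_norm_eq_one hint h)
  refine ⟨r, hr, ?_⟩
  simpa [Subtype.ext_iff] using hxr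

end Kronecker

namespace zRing

def zeta (ζ : ℂ) : zRing ζ := ⟨ζ, self_mem_zRing⟩

lemma coe_aeval_zeta (g : ℤ[X]) : ((aeval (zeta ζ) g : zRing ζ) : ℂ) = aeval ζ g :=
  (aeval_algHom_apply (zRing ζ).subtype.toIntAlgHom (zeta ζ) g).symm

lemma exists_aeval_zeta_eq (x : zRing ζ) : ∃ g : ℤ[X], aeval (zeta ζ) g = x := by
  obtain ⟨x, hx⟩ := x
  induction hx using Subring.closure_induction with
  | mem y hy => obtain rfl : y = ζ := hy; exact ⟨X, aeval_X _⟩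
  | zero => exact ⟨0, map_zero _⟩
  | one => exact ⟨1, map_one _⟩
  | add x y _ _ ihx ihy =>
    obtain ⟨g, hg⟩ := ihx
    obtain ⟨h, hh⟩ := ihy
    exact ⟨g + h, by rw [map_add, hg, hh]; rfl⟩
  | neg x _ ihx =>
    obtain ⟨g, hg⟩ := ihx
    exact ⟨-g, by rw [map_neg, hg]; rfl⟩
  | mul x y _ _ ihx ihy =>
    obtain ⟨g, hg⟩ := ihx
    obtain ⟨h, hh⟩ := ihy
    exact ⟨g * h, by rw [map_mul, hg, hh]; rfl⟩

lemma ringHom_ext {S : Type*} [Ring S] {φ ψ : zRing ζ →+* S} (h : φ (zeta ζ) = ψ (zeta ζ)) :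
    φ = ψ := by
  ext x
  obtain ⟨g, rfl⟩ := exists_aeval_zeta_eq x
  rw [← φ.toIntAlgHom_coe, ← ψ.toIntAlgHom_coe, ← aeval_algHom_apply, ← aeval_algHom_apply]
  exact congrArg (aeval · g) h

lemma mk_zeta : Ideal.Quotient.mk (Ideal.span {1 - zeta ζ}) (zeta ζ) = 1 :=
  (Ideal.Quotient.eq.2 (Ideal.mem_span_singleton_self _)).symm

lemma not_one_sub_zeta_dvd_two {p : ℕ} (hp : p.Prime) (hp2 : p ≠ 2) (hζ : IsPrimitiveRoot ζ p) :
    ¬ 1 - zeta ζ ∣ 2 := by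
  rintro ⟨y, hy⟩
  obtain ⟨g, rfl⟩ := exists_aeval_zeta_eq y
  have hroot : aeval ζ (2 - (1 - X) * g) = 0 := by
    have h0 : aeval (zeta ζ) (2 - (1 - X) * g) = 0 := by
      simp only [map_sub, map_mul, map_one, aeval_X, map_ofNat]
      linear_combination hy
    rw [← coe_aeval_zeta, h0, ZeroMemClass.coe_zero]
  have hdvd : cyclotomic p ℤ ∣ 2 - (1 - X) * g := by
    rw [cyclotomic_eq_minpoly hζ hp.pos]
    exact minpoly.isIntegrallyClosed_dvd (hζ.isIntegral hp.pos) hroot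
  have : Fact p.Prime := ⟨hp⟩
  have h2 : (p : ℤ) ∣ 2 := by simpa using eval_dvd (x := 1) hdvd
  have := Nat.le_of_dvd two_pos (by exact_mod_cast h2)
  have := hp.two_le
  omega

variable [NeZero n] (hζ : IsPrimitiveRoot ζ n)

def conjHom : zRing ζ →+* zRing ζ :=
  (starRingEnd ℂ).restrict _ _ fun _ => hζ.conj_mem_zRing

lemma mk_conjHom (x : zRing ζ) :
    Ideal.Quotient.mk (Ideal.span {1 - zeta ζ}) (conjHom hζ x) =
      Ideal.Quotient.mk (Ideal.span {1 - zeta ζ}) x := by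
  have hconj : conjHom hζ (zeta ζ) = zeta ζ ^ (n - 1) :=
    Subtype.ext (by simp [conjHom, zeta, hζ.conj_eq_inv, hζ.inv_eq_pow_pred])
  refine RingHom.congr_fun (ringHom_ext (φ := (Ideal.Quotient.mk _).comp (conjHom hζ)) ?_) x
  simp [hconj, mk_zeta]

end zRing

lemma IsPrimitiveRoot.div_conj_ne_neg_pow {p : ℕ} (hp : p.Prime) (hp2 : p ≠ 2)
    (hζ : IsPrimitiveRoot ζ p) (e : (zRing ζ)ˣ) (r : ℕ) :
    ((e : zRing ζ) : ℂ) / conj ((e : zRing ζ) : ℂ) ≠ -ζ ^ r := by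
  have : NeZero p := ⟨hp.ne_zero⟩
  intro h
  have he : (e : zRing ζ) = -zRing.zeta ζ ^ r * zRing.conjHom hζ e := by
    rw [div_eq_iff (by simp)] at h
    exact Subtype.ext h
  refine zRing.not_one_sub_zeta_dvd_two hp hp2 hζ ?_
  rw [← Ideal.mem_span_singleton, ← Ideal.Quotient.eq_zero_iff_mem, map_ofNat]
  have hmk := congrArg (Ideal.Quotient.mk (Ideal.span {1 - zRing.zeta ζ})) he
  rw [map_mul, map_neg, map_pow, zRing.mk_zeta, one_pow, zRing.mk_conjHom] at hmk
  exact ((e.isUnit.map _).mul_left_eq_zero).1 (by linear_combination hmk)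

lemma IsPrimitiveRoot.exists_sq_eq_pow (hζ : IsPrimitiveRoot ζ n) (hn : Odd n) (r : ℕ) :
    ∃ j < n, (ζ ^ j) ^ 2 = ζ ^ r := by
  obtain ⟨k, rfl⟩ := hn
  refine ⟨r * (k + 1) % (2 * k + 1), Nat.mod_lt _ (by omega), ?_⟩
  rw [hζ.eq_orderOf, pow_mod_orderOf, ← pow_mul,
    show r * (k + 1) * 2 = r + (2 * k + 1) * r by ring, pow_add, pow_mul, hζ.pow_eq_one,
    one_pow, mul_one]

lemma IsPrimitiveRoot.exists_unit_zRealRing_of_div_conj_eq_sq (hζ : IsPrimitiveRoot ζ n)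
    (hn : 2 < n) (e : (zRing ζ)ˣ) {η : ℂ} (hη : η ∈ zRing ζ) (hη1 : ‖η‖ = 1)
    (he : ((e : zRing ζ) : ℂ) / conj ((e : zRing ζ) : ℂ) = η ^ 2) :
    ∃ u : (zRealRing ζ)ˣ, ((e : zRing ζ) : ℂ) = η * u := by
  have : NeZero n := ⟨by omega⟩
  set x : ℂ := ((e : zRing ζ) : ℂ)
  have hx0 : x ≠ 0 := by simp [x]
  have hηη : η * conj η = 1 := by rw [Complex.mul_conj', hη1]; simp
  rw [div_eq_iff (by simpa using hx0)] at he
  set u := conj η * x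
  have hu0 : u ≠ 0 := mul_ne_zero (right_ne_zero_of_mul_eq_one hηη) hx0
  have hcu : conj u = u := by
    simp only [u, map_mul, Complex.conj_conj]
    linear_combination (-conj η) * he - η * conj x * hηη
  have hu : u ∈ zRealRing ζ :=
    hζ.mem_zRealRing_of_conj_eq_self hn (mul_mem (hζ.conj_mem_zRing hη) (e : zRing ζ).2) hcu
  have hu' : u⁻¹ ∈ zRealRing ζ := by
    refine hζ.mem_zRealRing_of_conj_eq_self hn ?_ (by rw [map_inv₀, hcu])
    rw [mul_inv, inv_eq_of_mul_eq_one_left hηη]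
    exact mul_mem hη (zRing.inv_coe_units_mem e)
  refine ⟨⟨⟨u, hu⟩, ⟨u⁻¹, hu'⟩, Subtype.ext (mul_inv_cancel₀ hu0),
    Subtype.ext (inv_mul_cancel₀ hu0)⟩, ?_⟩
  change x = η * (conj η * x)
  linear_combination -x * hηη

/-- **Kummer's lemma on units.** For an odd prime `p` and a primitive
`p`-th root of unity `ζ ∈ ℂ`, every unit of `ℤ[ζ]` can be written as `ζ^j · u` with
`0 ≤ j < p` and `u` a unit of the real subring `ℤ[ζ + ζ⁻¹]`. -/
theorem statement2 (p : ℕ) (hp : p.Prime) (hodd : Odd p) (ζ : ℂ)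
    (hζ : IsPrimitiveRoot ζ p) :
    ∀ f : (zRing ζ)ˣ, ∃ j : ℕ, j < p ∧ ∃ u : (zRealRing ζ)ˣ,
      ((f : zRing ζ) : ℂ) = ζ ^ j * ((u : zRealRing ζ) : ℂ) := by
  intro f
  have : NeZero p := ⟨hp.ne_zero⟩
  have hp2 : p ≠ 2 := by rintro rfl; exact Nat.not_odd_iff_even.2 even_two hodd
  have hmem : ((f : zRing ζ) : ℂ) / conj ((f : zRing ζ) : ℂ) ∈ zRing ζ := by
    rw [div_eq_mul_inv, ← map_inv₀]
    exact mul_mem (f : zRing ζ).2 (hζ.conj_mem_zRing (zRing.inv_coe_units_mem f))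
  have hnorm : ‖((f : zRing ζ) : ℂ) / conj ((f : zRing ζ) : ℂ)‖ = 1 := by
    rw [norm_div, Complex.norm_conj, div_self (norm_ne_zero_iff.2 (by simp))]
  obtain ⟨r, -, hr | hr⟩ := hζ.exists_pow_or_neg_pow_of_mem_zRing hodd hmem hnorm
  · obtain ⟨j, hj, hjr⟩ := hζ.exists_sq_eq_pow hodd r
    obtain ⟨u, hu⟩ := hζ.exists_unit_zRealRing_of_div_conj_eq_sq
      (hp.two_le.lt_of_ne' hp2) f (pow_mem self_mem_zRing j)
      (by rw [norm_pow, hζ.norm'_eq_one hp.ne_zero, one_pow]) (hr.trans hjr.symm)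
    exact ⟨j, hj, u, hu⟩
  · exact absurd hr (hζ.div_conj_ne_neg_pow hp hp2 f r)
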